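/- (Hirschhorn) For all positive integers n and k, b(n;k) equals the sum, over all partitions π = (b_1, ..., b_k) of n into exactly k parts satisfying b_i − b_{i+1} ≥ 2 for 1 ≤ i ≤ k−1 and b_k ≥ 1, of the weight ω(π) = 2^{t(π)}, where t(π) = #{1 ≤ i ≤ k−1 : b_i − b_{i+1} > 2} + (1 if b_k > 1, and 0 if b_k = 1). -/

import Mathlib

open Finset
open scoped Classical

namespace BasisPartitions

/-! ### Ordinary partitions -/

/-- The parts of a partition, listed in weakly decreasing order. -/
def sparts {n : ℕ} (π : n.Partition) : List ℕ := π.parts.sort (· ≥ ·)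

/-- `conj L j` is the number of parts that are `≥ j`, i.e. the `j`-th part of the
conjugate partition (for `j ≥ 1`). -/
def conj (L : List ℕ) (j : ℕ) : ℕ := L.countP (fun b => j ≤ b)

/-- The Durfee square size: the largest `k` such that the `k`-th part is `≥ k`. -/
def durfee (L : List ℕ) : ℕ := (List.range L.length).countP (fun i => i + 1 ≤ L.getD i 0)

/-- The `(i+1)`-st successive rank `r_{i+1} = b_{i+1} - c_{i+1}` (0-indexed `i`). -/
def rank (L : List ℕ) (i : ℕ) : ℤ := (L.getD i 0 : ℤ) - (conj L (i + 1) : ℤ)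

/-- The successive rank vector `(r_1, ..., r_k)` where `k` is the Durfee square size. -/
def ranks (L : List ℕ) : List ℤ := (List.range (durfee L)).map (rank L)

/-- A basis partition: the partitioned number is minimal among all partitions having
the same successive rank vector. -/
def IsBasis {n : ℕ} (π : n.Partition) : Prop :=
  ∀ (m : ℕ) (π' : m.Partition), ranks (sparts π') = ranks (sparts π) → n ≤ m

/-- The signature: the number of distinct part sizes below the Durfee square. -/
def sig (L : List ℕ) : ℕ := ((L.drop (durfee L)).dedup).length

/-- `b(n;k)`: the number of basis partitions of `n` with Durfee square size `k`. -/
noncomputable def bCount (n k : ℕ) : ℕ :=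
  Nat.card {π : n.Partition // IsBasis π ∧ durfee (sparts π) = k}

/-- `b(n,k,s)`: the number of basis partitions of `n` with Durfee square size `k`
and signature `s`. -/
noncomputable def bCount3 (n k s : ℕ) : ℕ :=
  Nat.card {π : n.Partition // IsBasis π ∧ durfee (sparts π) = k ∧ sig (sparts π) = s}

/-- `B(n;j)`: the number of basis partitions of `n` with signature `j`. -/
noncomputable def BCount (n j : ℕ) : ℕ :=
  Nat.card {π : n.Partition // IsBasis π ∧ sig (sparts π) = j}

/-- Rogers–Ramanujan condition: exactly `k` parts, consecutive gaps `≥ 2`, last part `≥ 1`. -/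
def RR (L : List ℕ) (k : ℕ) : Prop :=
  L.length = k ∧ (∀ i, i + 1 < k → L.getD (i + 1) 0 + 2 ≤ L.getD i 0) ∧ 1 ≤ L.getD (k - 1) 0

/-- `t(π)` for a Rogers–Ramanujan partition: the number of gaps `> 2`, plus 1 if the
last part is `> 1`. -/
def tRR (L : List ℕ) (k : ℕ) : ℕ :=
  ((Finset.range (k - 1)).filter (fun i => L.getD (i + 1) 0 + 2 < L.getD i 0)).card +
    (if 1 < L.getD (k - 1) 0 then 1 else 0)

/-- Primary condition: exactly `k` parts, each part `≥ k`. -/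
def Primary (L : List ℕ) (k : ℕ) : Prop := L.length = k ∧ ∀ x ∈ L, k ≤ x

/-- `t(π)` for a primary partition: the number of strict descents, plus 1 if the
last part is `> k`. -/
def tP (L : List ℕ) (k : ℕ) : ℕ :=
  ((Finset.range (k - 1)).filter (fun i => L.getD (i + 1) 0 < L.getD i 0)).card +
    (if k < L.getD (k - 1) 0 then 1 else 0)

/-- A complete basis partition: every `j` with `1 ≤ j ≤ k-1` occurs as a part of `π_b`
(a row below the Durfee square) or as a part of `π_r` (a column length strictly to the
right of the Durfee square). -/
def IsComplete {n : ℕ} (π : n.Partition) : Prop :=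
  ∀ j : ℕ, 1 ≤ j → j < durfee (sparts π) →
    j ∈ (sparts π).drop (durfee (sparts π)) ∨
      ∃ c : ℕ, durfee (sparts π) < c ∧ conj (sparts π) c = j

/-- `b_c(n)`: the number of complete basis partitions of `n`. -/
noncomputable def bc (n : ℕ) : ℕ := Nat.card {π : n.Partition // IsBasis π ∧ IsComplete π}

/-! ### Partitions with non-repeating odd parts and their 2-modular graphs -/

/-- Partitions with non-repeating (distinct) odd parts. -/
def Pod {n : ℕ} (π : n.Partition) : Prop := ∀ x, Odd x → π.parts.count x ≤ 1

/-- The size (sum of entries) of the `c`-th column (1-indexed) of the 2-modular graph. -/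
def mcolSize (L : List ℕ) (c : ℕ) : ℕ :=
  (L.map (fun x => if 2 * c ≤ x then 2 else if x = 2 * c - 1 then 1 else 0)).sum

/-- The length (number of entries) of the `c`-th column (1-indexed) of the 2-modular graph. -/
def mcolLen (L : List ℕ) (c : ℕ) : ℕ := L.countP (fun x => 2 * c - 1 ≤ x)

/-- The number of entries in a row of the 2-modular graph recording the part `x`,
namely `⌈x/2⌉`. -/
def mrowLen (x : ℕ) : ℕ := (x + 1) / 2

/-- The 2-modular Durfee square size: the largest `k` with `⌈b_k/2⌉ ≥ k`. -/
def mdurfee (L : List ℕ) : ℕ := (List.range L.length).countP (fun i => 2 * i + 1 ≤ L.getD i 0)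

/-- The `(i+1)`-st 2-modular successive rank: (size of row `i+1`) − (size of column `i+1`). -/
def mrank (L : List ℕ) (i : ℕ) : ℤ := (L.getD i 0 : ℤ) - (mcolSize L (i + 1) : ℤ)

/-- The 2-modular successive rank vector. -/
def mranks (L : List ℕ) : List ℤ := (List.range (mdurfee L)).map (mrank L)

/-- A minimal basis partition in `P_{o,d}`: the partitioned number is minimal among all
partitions with non-repeating odd parts having the same 2-modular successive rank vector. -/
def MinBasis {n : ℕ} (μ : n.Partition) : Prop :=
  Pod μ ∧ ∀ (m : ℕ) (μ' : m.Partition), Pod μ' →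
    mranks (sparts μ') = mranks (sparts μ) → n ≤ m

/-- A basis partition in `P_{o,d}`: no row of the 2-modular graph strictly below the Durfee
square has size equal to the size of a column strictly to the right of the Durfee square. -/
def PodBasis {n : ℕ} (π : n.Partition) : Prop :=
  Pod π ∧ ∀ i, mdurfee (sparts π) ≤ i → i < (sparts π).length →
    ∀ c, mdurfee (sparts π) < c → mcolSize (sparts π) c ≠ (sparts π).getD i 0

/-- The signature of a basis partition in `P_{o,d}`: the number of distinct sizes among the
rows of the 2-modular graph strictly below the Durfee square. -/
def msig (L : List ℕ) : ℕ := ((L.drop (mdurfee L)).dedup).length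

/-- The ℓ-signature: the number of distinct lengths among the rows of the 2-modular
graph strictly below the Durfee square. -/
def lsig (L : List ℕ) : ℕ := (((L.drop (mdurfee L)).map mrowLen).dedup).length

/-- `b(n;j)` for `P_{o,d}`: the number of basis partitions of `n` in `P_{o,d}` with
signature `j`. -/
noncomputable def podB (n j : ℕ) : ℕ := Nat.card {π : n.Partition // PodBasis π ∧ msig (sparts π) = j}

/-- The number of odd parts. -/
def numOdd (L : List ℕ) : ℕ := L.countP (fun x => x % 2 = 1)

/-- A special partition: distinct parts with consecutive differences `≥ 4`, where a
difference equal to `4` is permitted only when both parts are even. -/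
def Special (L : List ℕ) : Prop :=
  ∀ i, i + 1 < L.length →
    L.getD (i + 1) 0 + 4 ≤ L.getD i 0 ∧
      (L.getD i 0 = L.getD (i + 1) 0 + 4 → Even (L.getD i 0) ∧ Even (L.getD (i + 1) 0))

/-- The `i`-th part of a special partition, with the convention that the part just after
the last one is `-2`. -/
def hpart (L : List ℕ) (i : ℕ) : ℤ := if i < L.length then (L.getD i 0 : ℤ) else -2

/-- `ℓ(π)`: the number of gaps `> 4` in a special partition, with the convention
`h_{k+1} = -2`. -/
def ell (L : List ℕ) : ℕ :=
  ((Finset.range L.length).filter (fun i => 4 < hpart L i - hpart L (i + 1))).card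

/-!
Cut the diagram of a partition with Durfee square `k` into the square, the rows below it
(a multiset `μ`) and the columns to its right (a multiset `ν`), both with entries in `[1, k]`.
Then `n = k² + Σμ + Σν` and the `j`-th successive rank is `#{ν ≥ j} - #{μ ≥ j}`. A value common
to `μ` and `ν` can be removed from both without changing the ranks, so basis partitions have
`μ` and `ν` disjoint; conversely, when they are disjoint and `(μ', ν')` has the same ranks,
`#{μ' ≥ j} - #{μ ≥ j}` is nonincreasing in `j` and vanishes beyond `k`, so `Σμ ≤ Σμ'` and
`Σν ≤ Σν'`. Rogers–Ramanujan partitions into `k` parts correspond to multisets `m` with entries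
in `[1, k]` via `b_i = 2(k - i) + 1 + #{m ≥ i}`, and `t` is the number of distinct values of `m`.
Sending a basis partition to the Rogers–Ramanujan partition of `m = μ + ν`, the fibre over `m`
consists of the `2^t` ways of distributing the distinct values of `m` between `μ` and `ν`.
-/

end BasisPartitions

theorem List.lt_countP_range_iff {p : ℕ → Prop} [DecidablePred p] (hp : Antitone p) {N i : ℕ}
    (hi : i < N) : i < (List.range N).countP (fun j => decide (p j)) ↔ p i := by
  induction N with
  | zero => omega
  | succ N ih =>
    rw [List.range_succ, List.countP_append]
    by_cases hN : p N
    · have hall : (List.range N).countP (fun j => decide (p j)) = N := by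
        rw [List.countP_eq_length.mpr fun j hj => decide_eq_true (hp (List.mem_range.mp hj).le hN),
          List.length_range]
      simp only [hall, List.countP_singleton, hN, decide_true, if_true]
      exact ⟨fun _ => hp (Nat.lt_succ_iff.mp hi) hN, fun _ => hi⟩
    · have hle : (List.range N).countP (fun j => decide (p j)) ≤ N :=
        (List.countP_le_length).trans_eq List.length_range
      simp only [List.countP_singleton, hN, decide_false, Bool.false_eq_true, if_false, add_zero]
      rcases Nat.lt_succ_iff_lt_or_eq.mp hi with hi | rfl
      · exact ih hi
      · exact ⟨fun h => absurd h (not_lt.mpr hle), fun h => absurd h hN⟩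

theorem List.Pairwise.getD_le_getD {L : List ℕ} (hL : L.Pairwise (· ≥ ·)) {i j : ℕ} (hij : i ≤ j) :
    L.getD j 0 ≤ L.getD i 0 := by
  by_cases hj : j < L.length
  · rw [List.getD_eq_getElem _ _ hj, List.getD_eq_getElem _ _ (hij.trans_lt hj)]
    rcases hij.lt_or_eq with h | rfl
    · exact List.pairwise_iff_getElem.mp hL i j _ hj h
    · rfl
  · rw [List.getD_eq_default _ _ (not_lt.mp hj)]
    exact Nat.zero_le _

theorem List.sum_map_range {M : Type*} [AddCommMonoid M] (k : ℕ) (f : ℕ → M) :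
    ((List.range k).map f).sum = ∑ i ∈ Finset.range k, f i := by
  rw [Finset.sum, Finset.range_val, Multiset.range, Multiset.map_coe, Multiset.sum_coe]

theorem Multiset.filter_mem_toFinset_add_of_disjoint {α : Type*} [DecidableEq α] {s t : Multiset α}
    (h : Disjoint s t) : (s + t).filter (· ∈ t.toFinset) = t := by
  rw [Multiset.filter_add, Multiset.filter_eq_nil.mpr fun a ha ht =>
      Multiset.disjoint_left.mp h ha (Multiset.mem_toFinset.mp ht),
    Multiset.filter_eq_self.mpr fun a ha => Multiset.mem_toFinset.mpr ha, zero_add]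

namespace BasisPartitions

lemma durfee_le_length (L : List ℕ) : durfee L ≤ L.length :=
  List.countP_le_length.trans_eq List.length_range

lemma lt_durfee_iff {L : List ℕ} (hL : L.Pairwise (· ≥ ·)) {i : ℕ} :
    i < durfee L ↔ i + 1 ≤ L.getD i 0 := by
  by_cases hi : i < L.length
  · refine List.lt_countP_range_iff (fun a b hab h => ?_) hi
    exact (Nat.add_le_add_right hab 1).trans (h.trans (hL.getD_le_getD hab))
  · have := durfee_le_length L
    simp only [List.getD_eq_default _ _ (not_lt.mp hi)]
    omega

lemma durfee_le_getD {L : List ℕ} (hL : L.Pairwise (· ≥ ·)) {i : ℕ} (hi : i < durfee L) :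
    durfee L ≤ L.getD i 0 := by
  have := (lt_durfee_iff hL).mp (Nat.sub_one_lt_of_lt hi)
  have := hL.getD_le_getD (Nat.le_sub_one_of_lt hi)
  omega

lemma getD_le_durfee {L : List ℕ} (hL : L.Pairwise (· ≥ ·)) {i : ℕ} (hi : durfee L ≤ i) :
    L.getD i 0 ≤ durfee L := by
  have := mt (lt_durfee_iff hL).mpr (lt_irrefl (durfee L))
  have := hL.getD_le_getD hi
  omega

/-! ### Counting parts above a threshold -/

def countGe (s : Multiset ℕ) (j : ℕ) : ℕ := s.countP (j ≤ ·)

@[simp] lemma countGe_zero (j : ℕ) : countGe 0 j = 0 := rfl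

lemma countGe_add (s t : Multiset ℕ) (j : ℕ) :
    countGe (s + t) j = countGe s j + countGe t j :=
  Multiset.countP_add _ _ _

lemma countGe_cons (a : ℕ) (s : Multiset ℕ) (j : ℕ) :
    countGe (a ::ₘ s) j = countGe s j + if j ≤ a then 1 else 0 :=
  Multiset.countP_cons _ _ _

lemma countGe_replicate (c a j : ℕ) :
    countGe (Multiset.replicate c a) j = if j ≤ a then c else 0 := by
  induction c with
  | zero => simp
  | succ c ih => rw [Multiset.replicate_succ, countGe_cons, ih]; split_ifs <;> rfl

lemma countGe_antitone (s : Multiset ℕ) : Antitone (countGe s) :=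
  fun _ _ hij => by
    simp only [countGe, Multiset.countP_eq_card_filter]
    exact Multiset.card_le_card (Multiset.monotone_filter_right s fun _ h => hij.trans h)

lemma countGe_eq_count_add (s : Multiset ℕ) (j : ℕ) :
    countGe s j = s.count j + countGe s (j + 1) := by
  induction s using Multiset.induction_on with
  | empty => simp
  | cons a s ih =>
    rw [countGe_cons, countGe_cons, Multiset.count_cons, ih]
    split_ifs <;> omega

lemma countGe_erase {s : Multiset ℕ} {v : ℕ} (hv : v ∈ s) (j : ℕ) :
    countGe s j = countGe (s.erase v) j + if j ≤ v then 1 else 0 := by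
  conv_lhs => rw [← Multiset.cons_erase hv]
  exact countGe_cons _ _ _

lemma countGe_eq_zero {s : Multiset ℕ} {k : ℕ} (hs : ∀ x ∈ s, x ≤ k) {j : ℕ} (hj : k < j) :
    countGe s j = 0 :=
  Multiset.countP_eq_zero.mpr fun x hx h => by have := hs x hx; omega

lemma sum_eq_sum_countGe {s : Multiset ℕ} {k : ℕ} (hs : ∀ x ∈ s, x ≤ k) :
    s.sum = ∑ i ∈ range k, countGe s (i + 1) := by
  induction s using Multiset.induction_on with
  | empty => simp
  | cons a s ih =>
    have ha : a ≤ k := hs a (Multiset.mem_cons_self a s)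
    simp only [Multiset.sum_cons, countGe_cons, sum_add_distrib,
      ih fun x hx => hs x (Multiset.mem_cons_of_mem hx), Finset.sum_boole, Nat.cast_id]
    rw [show (range k).filter (fun i => i + 1 ≤ a) = range a by ext; simp only [mem_filter, mem_range]; omega, card_range,
      add_comm]

/-- For antitone `A`, the conjugate of the partition with parts `A i - A k`, `i < k`. -/
def ofCountGe (k : ℕ) (A : ℕ → ℕ) : Multiset ℕ :=
  ∑ i ∈ range k, Multiset.replicate (A i - A (i + 1)) (i + 1)

lemma count_ofCountGe (k : ℕ) (A : ℕ → ℕ) (i : ℕ) :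
    (ofCountGe k A).count (i + 1) = if i < k then A i - A (i + 1) else 0 := by
  simp [ofCountGe, Multiset.count_sum', Multiset.count_replicate]

lemma mem_ofCountGe {k : ℕ} {A : ℕ → ℕ} {x : ℕ} (hx : x ∈ ofCountGe k A) : 1 ≤ x ∧ x ≤ k := by
  obtain ⟨i, hi, hx⟩ := Multiset.mem_sum.mp hx
  rw [Multiset.eq_of_mem_replicate hx]
  have := mem_range.mp hi
  omega

lemma countGe_ofCountGe {A : ℕ → ℕ} (hA : Antitone A) {k i : ℕ} (hi : i ≤ k) :
    countGe (ofCountGe k A) (i + 1) = A i - A k := by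
  induction k with
  | zero => simp [ofCountGe, Nat.le_zero.mp hi]
  | succ k ih =>
    rw [ofCountGe, sum_range_succ, ← ofCountGe, countGe_add, countGe_replicate]
    have := hA (show k ≤ k + 1 by omega)
    rcases hi.lt_or_eq with hi | rfl
    · have := hA (show i ≤ k by omega)
      rw [ih (by omega), if_pos (by omega)]
      omega
    · rw [countGe_eq_zero (fun x hx => (mem_ofCountGe hx).2) (by omega), if_neg (by omega)]
      omega

lemma ofCountGe_congr {k : ℕ} {A B : ℕ → ℕ} (h : ∀ i ≤ k, A i = B i) :
    ofCountGe k A = ofCountGe k B :=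
  sum_congr rfl fun i hi => by
    rw [h i (mem_range.mp hi).le, h (i + 1) (mem_range.mp hi)]

lemma ofCountGe_countGe {s : Multiset ℕ} {k : ℕ} (hs : ∀ x ∈ s, 1 ≤ x ∧ x ≤ k) :
    ofCountGe k (fun i => countGe s (i + 1)) = s := by
  ext j
  rcases j with _ | i
  · rw [Multiset.count_eq_zero.mpr fun h => by have := mem_ofCountGe h; omega,
      Multiset.count_eq_zero.mpr fun h => by have := hs 0 h; omega]
  · rw [count_ofCountGe, countGe_eq_count_add s (i + 1)]
    split_ifs with hi
    · omega
    · exact (Multiset.count_eq_zero.mpr fun h => by have := hs _ h; omega).symm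

lemma card_toFinset_ofCountGe (k : ℕ) (A : ℕ → ℕ) :
    (ofCountGe k A).toFinset.card = ((range k).filter fun i => A (i + 1) < A i).card := by
  suffices (ofCountGe k A).toFinset = ((range k).filter fun i => A (i + 1) < A i).image (· + 1) by
    rw [this, card_image_of_injective _ (add_left_injective 1)]
  ext j
  rw [Multiset.mem_toFinset, mem_image]
  rcases j with _ | i
  · exact ⟨fun h => absurd (mem_ofCountGe h).1 (by omega), fun ⟨_, _, h⟩ => by omega⟩
  · rw [← Multiset.count_pos, count_ofCountGe]
    simp only [mem_filter, mem_range, Nat.add_right_cancel_iff, exists_eq_right]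
    split_ifs <;> omega

/-! ### Cutting a diagram along its Durfee square -/

section Decomposition

def rowsBelow (L : List ℕ) : Multiset ℕ := ↑(L.drop (durfee L))

def colsRight (L : List ℕ) : Multiset ℕ := ofCountGe (durfee L) fun i => L.getD i 0 - durfee L

def topRows (k : ℕ) (ν : Multiset ℕ) : List ℕ := (List.range k).map fun i => k + countGe ν (i + 1)

def rankVector (k : ℕ) (μ ν : Multiset ℕ) : List ℤ :=
  (List.range k).map fun i => (countGe ν (i + 1) : ℤ) - countGe μ (i + 1)

lemma sum_topRows {k : ℕ} {ν : Multiset ℕ} (hν : ∀ x ∈ ν, x ≤ k) :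
    (topRows k ν).sum = k * k + ν.sum := by
  rw [topRows, List.sum_map_range, sum_add_distrib, sum_const, card_range, smul_eq_mul,
    sum_eq_sum_countGe hν]

lemma mem_colsRight {L : List ℕ} {x : ℕ} (hx : x ∈ colsRight L) : 1 ≤ x ∧ x ≤ durfee L :=
  mem_ofCountGe hx

variable {L : List ℕ} (hL : L.Pairwise (· ≥ ·))
include hL

lemma le_durfee_of_mem_rowsBelow {x : ℕ} (hx : x ∈ rowsBelow L) : x ≤ durfee L := by
  obtain ⟨i, hi, rfl⟩ := List.mem_iff_getElem.mp (Multiset.mem_coe.mp hx)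
  rw [List.getElem_drop, ← List.getD_eq_getElem _ 0]
  exact getD_le_durfee hL (Nat.le_add_right _ _)

lemma getD_eq_durfee_add_countGe {i : ℕ} (hi : i < durfee L) :
    L.getD i 0 = durfee L + countGe (colsRight L) (i + 1) := by
  have hA : Antitone fun i => L.getD i 0 - durfee L :=
    fun a b hab => Nat.sub_le_sub_right (hL.getD_le_getD hab) _
  rw [colsRight, countGe_ofCountGe hA hi.le, Nat.sub_eq_zero_of_le (getD_le_durfee hL le_rfl)]
  have := durfee_le_getD hL hi
  omega

lemma conj_eq_durfee_add_countGe {i : ℕ} (hi : i < durfee L) :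
    conj L (i + 1) = durfee L + countGe (rowsBelow L) (i + 1) := by
  conv_lhs => rw [conj, ← List.take_append_drop (durfee L) L, List.countP_append]
  congr 1
  refine (List.countP_eq_length.mpr fun x hx => ?_).trans
    (List.length_take_of_le (durfee_le_length L))
  obtain ⟨j, hj, rfl⟩ := List.mem_iff_getElem.mp hx
  rw [List.getElem_take, ← List.getD_eq_getElem _ 0]
  have := durfee_le_getD hL (show j < durfee L by rw [List.length_take] at hj; omega)
  simpa using hi.trans_le this

lemma ranks_eq_rankVector : ranks L = rankVector (durfee L) (rowsBelow L) (colsRight L) :=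
  List.map_congr_left fun i hi => by
    have hi := List.mem_range.mp hi
    rw [rank, getD_eq_durfee_add_countGe hL hi, conj_eq_durfee_add_countGe hL hi]
    push_cast
    ring

lemma take_durfee_eq_topRows : L.take (durfee L) = topRows (durfee L) (colsRight L) := by
  refine List.ext_getElem (by simp [topRows, durfee_le_length L]) fun i h₁ h₂ => ?_
  have hi : i < durfee L := by simpa [topRows] using h₂
  rw [List.getElem_take, ← List.getD_eq_getElem _ 0, getD_eq_durfee_add_countGe hL hi]
  simp [topRows]

lemma coe_eq_topRows_add_rowsBelow :
    (L : Multiset ℕ) = ↑(topRows (durfee L) (colsRight L)) + rowsBelow L := by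
  rw [rowsBelow, Multiset.coe_add, ← take_durfee_eq_topRows hL, List.take_append_drop]

lemma sum_eq_durfee_mul_add :
    L.sum = durfee L * durfee L + (rowsBelow L).sum + (colsRight L).sum := by
  rw [← Multiset.sum_coe, coe_eq_topRows_add_rowsBelow hL, Multiset.sum_add, Multiset.sum_coe,
    sum_topRows fun x hx => (mem_colsRight hx).2]
  ring

end Decomposition

section Assembly

def assemble (k : ℕ) (μ ν : Multiset ℕ) : List ℕ := topRows k ν ++ μ.sort (· ≥ ·)

variable {k : ℕ} {μ ν : Multiset ℕ}

lemma coe_assemble : (assemble k μ ν : Multiset ℕ) = ↑(topRows k ν) + μ := by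
  rw [assemble, ← Multiset.coe_add, Multiset.sort_eq]

lemma length_topRows : (topRows k ν).length = k := by simp [topRows]

lemma getD_assemble_of_lt {i : ℕ} (hi : i < k) :
    (assemble k μ ν).getD i 0 = k + countGe ν (i + 1) := by
  rw [assemble, List.getD_append _ _ _ _ (by rwa [length_topRows])]
  simp [topRows, hi]

variable (hμ : ∀ x ∈ μ, x ≤ k)
include hμ

lemma pairwise_assemble : (assemble k μ ν).Pairwise (· ≥ ·) := by
  refine List.pairwise_append.mpr ⟨?_, Multiset.pairwise_sort _ _, fun a ha b hb => ?_⟩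
  · refine List.pairwise_iff_getElem.mpr fun i j hi hj hij => ?_
    simp only [topRows, List.getElem_map, List.getElem_range]
    have := countGe_antitone ν (show i + 1 ≤ j + 1 by omega)
    omega
  · obtain ⟨i, -, rfl⟩ := List.mem_map.mp ha
    have := hμ b ((Multiset.mem_sort _).mp hb)
    omega

lemma getD_assemble_le {i : ℕ} (hi : k ≤ i) : (assemble k μ ν).getD i 0 ≤ k := by
  rw [assemble, List.getD_append_right _ _ _ _ (by rwa [length_topRows])]
  by_cases h : i - (topRows k ν).length < (μ.sort (· ≥ ·)).length
  · rw [List.getD_eq_getElem _ _ h]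
    exact hμ _ ((Multiset.mem_sort _).mp (List.getElem_mem h))
  · rw [List.getD_eq_default _ _ (not_lt.mp h)]
    exact Nat.zero_le _

lemma durfee_assemble : durfee (assemble k μ ν) = k :=
  eq_of_forall_lt_iff fun i => by
    rw [lt_durfee_iff (pairwise_assemble hμ)]
    by_cases hi : i < k
    · rw [getD_assemble_of_lt hi]
      omega
    · have := getD_assemble_le hμ (ν := ν) (not_lt.mp hi)
      omega

lemma rowsBelow_assemble : rowsBelow (assemble k μ ν) = μ := by
  rw [rowsBelow, durfee_assemble hμ, assemble, List.drop_left' length_topRows, Multiset.sort_eq]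

lemma colsRight_assemble (hν : ∀ x ∈ ν, 1 ≤ x ∧ x ≤ k) : colsRight (assemble k μ ν) = ν := by
  rw [colsRight, durfee_assemble hμ]
  conv_rhs => rw [← ofCountGe_countGe hν]
  refine ofCountGe_congr fun i hi => ?_
  rcases hi.lt_or_eq with hi | rfl
  · rw [getD_assemble_of_lt hi]
    omega
  · rw [countGe_eq_zero (fun x hx => (hν x hx).2) (Nat.lt_succ_self i),
      Nat.sub_eq_zero_of_le (getD_assemble_le hμ le_rfl)]

lemma ranks_assemble (hν : ∀ x ∈ ν, 1 ≤ x ∧ x ≤ k) :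
    ranks (assemble k μ ν) = rankVector k μ ν := by
  rw [ranks_eq_rankVector (pairwise_assemble hμ), durfee_assemble hμ, rowsBelow_assemble hμ,
    colsRight_assemble hμ hν]

end Assembly

lemma sparts_sorted {n : ℕ} (π : n.Partition) : (sparts π).Pairwise (· ≥ ·) :=
  π.parts.pairwise_sort _

lemma coe_sparts {n : ℕ} (π : n.Partition) : (sparts π : Multiset ℕ) = π.parts :=
  π.parts.sort_eq _

lemma sparts_eq_of_coe_eq {n : ℕ} {π : n.Partition} {L : List ℕ} (hL : L.Pairwise (· ≥ ·))
    (h : (L : Multiset ℕ) = π.parts) : sparts π = L :=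
  List.Perm.eq_of_pairwise' (sparts_sorted π) hL (Multiset.coe_eq_coe.mp (by rw [coe_sparts, h]))

lemma sparts_injective {n : ℕ} : Function.Injective (sparts (n := n)) := fun π₁ π₂ h =>
  Nat.Partition.ext (by rw [← coe_sparts, h, coe_sparts])

lemma sum_sparts {n : ℕ} (π : n.Partition) : (sparts π).sum = n := by
  rw [← Multiset.sum_coe, coe_sparts, π.parts_sum]

lemma exists_sparts_eq_assemble {n k : ℕ} {μ ν : Multiset ℕ} (hμ : ∀ x ∈ μ, 1 ≤ x ∧ x ≤ k)
    (hν : ∀ x ∈ ν, x ≤ k) (hn : k * k + μ.sum + ν.sum = n) :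
    ∃ π : n.Partition, sparts π = assemble k μ ν := by
  refine ⟨⟨assemble k μ ν, fun {x} hx => ?_, ?_⟩,
    sparts_eq_of_coe_eq (pairwise_assemble fun x hx => (hμ x hx).2) rfl⟩
  · rcases Multiset.mem_add.mp (coe_assemble ▸ hx) with hx | hx
    · obtain ⟨i, hi, rfl⟩ := List.mem_map.mp (Multiset.mem_coe.mp hx)
      have := List.mem_range.mp hi
      omega
    · exact (hμ x hx).1
  · rw [coe_assemble, Multiset.sum_add, Multiset.sum_coe, sum_topRows hν, ← hn]
    ring

lemma parts_eq_topRows_add_rowsBelow {n : ℕ} (π : n.Partition) :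
    π.parts = ↑(topRows (durfee (sparts π)) (colsRight (sparts π))) + rowsBelow (sparts π) := by
  rw [← coe_sparts, ← coe_eq_topRows_add_rowsBelow (sparts_sorted π)]

lemma mem_rowsBelow_sparts {n : ℕ} (π : n.Partition) :
    ∀ x ∈ rowsBelow (sparts π), 1 ≤ x ∧ x ≤ durfee (sparts π) := fun _ hx =>
  ⟨π.parts_pos (coe_sparts π ▸ Multiset.mem_coe.mpr (List.mem_of_mem_drop hx)),
    le_durfee_of_mem_rowsBelow (sparts_sorted π) hx⟩

/-! ### Basis partitions -/

lemma countGe_le_countGe_of_disjoint {k : ℕ} {μ ν μ' ν' : Multiset ℕ} (hdisj : Disjoint μ ν)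
    (hμ : ∀ x ∈ μ, x ≤ k) (hν : ∀ x ∈ ν, x ≤ k) (hμ' : ∀ x ∈ μ', x ≤ k) (hν' : ∀ x ∈ ν', x ≤ k)
    (h : ∀ i < k, (countGe ν' (i + 1) : ℤ) - countGe μ' (i + 1) =
      countGe ν (i + 1) - countGe μ (i + 1))
    (i : ℕ) : countGe μ (i + 1) ≤ countGe μ' (i + 1) := by
  set d : ℕ → ℤ := fun i => countGe μ' (i + 1) - countGe μ (i + 1) with hd
  have vanish : ∀ i, k ≤ i → ∀ s : Multiset ℕ, (∀ x ∈ s, x ≤ k) → countGe s (i + 1) = 0 :=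
    fun i hi s hs => countGe_eq_zero hs (by omega)
  have hdν : ∀ i, d i = countGe ν' (i + 1) - countGe ν (i + 1) := fun i => by
    by_cases hi : i < k
    · linarith [h i hi]
    · simp only [hd, vanish i (not_lt.mp hi) _ hμ, vanish i (not_lt.mp hi) _ hν,
        vanish i (not_lt.mp hi) _ hμ', vanish i (not_lt.mp hi) _ hν']
  -- `i + 1` lies outside `μ` or outside `ν`, and in either case `d` does not increase there.
  have step : ∀ i, d (i + 1) ≤ d i := fun i => by
    have hμi := countGe_eq_count_add μ (i + 1)
    have hμ'i := countGe_eq_count_add μ' (i + 1)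
    have hνi := countGe_eq_count_add ν (i + 1)
    have hν'i := countGe_eq_count_add ν' (i + 1)
    have h₁ := hdν i
    have h₂ := hdν (i + 1)
    simp only [hd] at h₁ h₂ ⊢
    by_cases hmem : i + 1 ∈ μ
    · have := Multiset.count_eq_zero.mpr (Multiset.disjoint_left.mp hdisj hmem)
      omega
    · have := Multiset.count_eq_zero.mpr hmem
      omega
  have nonneg : ∀ j i, k ≤ i + j → 0 ≤ d i := fun j => by
    induction j with
    | zero => exact fun i hi => by simp [hd, vanish i hi _ hμ, vanish i hi _ hμ']
    | succ j ih => exact fun i hi => (ih (i + 1) (by omega)).trans (step i)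
  have := nonneg k i (by omega)
  simp only [hd] at this
  omega

lemma sum_add_sum_le_of_rankVector_eq {k : ℕ} {μ ν μ' ν' : Multiset ℕ} (hdisj : Disjoint μ ν)
    (hμ : ∀ x ∈ μ, x ≤ k) (hν : ∀ x ∈ ν, x ≤ k) (hμ' : ∀ x ∈ μ', x ≤ k) (hν' : ∀ x ∈ ν', x ≤ k)
    (h : rankVector k μ' ν' = rankVector k μ ν) : μ.sum + ν.sum ≤ μ'.sum + ν'.sum := by
  have hpt := fun i (hi : i < k) => List.map_inj_left.mp h i (List.mem_range.mpr hi)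
  have hleμ := countGe_le_countGe_of_disjoint hdisj hμ hν hμ' hν' hpt
  have hleν := countGe_le_countGe_of_disjoint hdisj.symm hν hμ hν' hμ'
    fun i hi => by linarith [hpt i hi]
  rw [sum_eq_sum_countGe hμ, sum_eq_sum_countGe hν, sum_eq_sum_countGe hμ', sum_eq_sum_countGe hν']
  gcongr with i
  exacts [hleμ i, hleν i]

lemma disjoint_of_isBasis {n : ℕ} {π : n.Partition} (hb : IsBasis π) :
    Disjoint (rowsBelow (sparts π)) (colsRight (sparts π)) := by
  set L := sparts π
  have hL := sparts_sorted π
  set k := durfee L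
  refine Multiset.disjoint_left.mpr fun {v} hvμ hvν => ?_
  have hμ : ∀ x ∈ (rowsBelow L).erase v, 1 ≤ x ∧ x ≤ k :=
    fun x hx => mem_rowsBelow_sparts π x (Multiset.mem_of_mem_erase hx)
  have hν : ∀ x ∈ (colsRight L).erase v, 1 ≤ x ∧ x ≤ k :=
    fun x hx => mem_colsRight (Multiset.mem_of_mem_erase hx)
  obtain ⟨π', hπ'⟩ := exists_sparts_eq_assemble hμ (fun x hx => (hν x hx).2) rfl
  have hranks : ranks (sparts π') = ranks L := by
    rw [hπ', ranks_assemble (fun x hx => (hμ x hx).2) hν, ranks_eq_rankVector hL]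
    refine List.map_congr_left fun i _ => ?_
    rw [countGe_erase hvμ, countGe_erase hvν]
    push_cast
    ring
  have hsum : n = k * k + (rowsBelow L).sum + (colsRight L).sum := by
    rw [← sum_sparts π]
    exact sum_eq_durfee_mul_add hL
  rw [← Multiset.cons_erase hvμ, ← Multiset.cons_erase hvν] at hsum
  simp only [Multiset.sum_cons] at hsum
  have := hb _ π' hranks
  have := (mem_rowsBelow_sparts π v hvμ).1
  omega

lemma isBasis_of_disjoint {n : ℕ} {π : n.Partition}
    (hdisj : Disjoint (rowsBelow (sparts π)) (colsRight (sparts π))) : IsBasis π := by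
  intro m π' hranks
  have hL := sparts_sorted π
  have hL' := sparts_sorted π'
  have hk : durfee (sparts π') = durfee (sparts π) := by
    simpa only [ranks, List.length_map, List.length_range] using congrArg List.length hranks
  rw [ranks_eq_rankVector hL, ranks_eq_rankVector hL', hk] at hranks
  have hle := sum_add_sum_le_of_rankVector_eq hdisj (fun x hx => (mem_rowsBelow_sparts π x hx).2)
    (fun x hx => (mem_colsRight hx).2) (fun x hx => hk ▸ (mem_rowsBelow_sparts π' x hx).2)
    (fun x hx => hk ▸ (mem_colsRight hx).2) hranks
  rw [← sum_sparts π, ← sum_sparts π', sum_eq_durfee_mul_add hL, sum_eq_durfee_mul_add hL', hk]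
  omega

lemma isBasis_iff_disjoint {n : ℕ} (π : n.Partition) :
    IsBasis π ↔ Disjoint (rowsBelow (sparts π)) (colsRight (sparts π)) :=
  ⟨disjoint_of_isBasis, isBasis_of_disjoint⟩

/-! ### Rogers–Ramanujan partitions -/

section RogersRamanujan

def rrList (k : ℕ) (m : Multiset ℕ) : List ℕ :=
  (List.range k).map fun i => 2 * (k - 1 - i) + 1 + countGe m (i + 1)

def rrMultiset (L : List ℕ) (k : ℕ) : Multiset ℕ :=
  ofCountGe k fun i => L.getD i 0 - (2 * (k - 1 - i) + 1)

lemma sum_range_staircase (k : ℕ) : ∑ i ∈ range k, (2 * (k - 1 - i) + 1) = k * k := by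
  induction k with
  | zero => rfl
  | succ k ih =>
    rw [sum_range_succ', sum_congr rfl fun i _ => show 2 * (k + 1 - 1 - (i + 1)) + 1 =
      2 * (k - 1 - i) + 1 by omega, ih, Nat.add_sub_cancel, Nat.sub_zero]
    ring

lemma length_rrList (k : ℕ) (m : Multiset ℕ) : (rrList k m).length = k := by simp [rrList]

lemma getD_rrList {k : ℕ} (m : Multiset ℕ) {i : ℕ} (hi : i < k) :
    (rrList k m).getD i 0 = 2 * (k - 1 - i) + 1 + countGe m (i + 1) := by
  simp [rrList, hi]

lemma pairwise_rrList (k : ℕ) (m : Multiset ℕ) : (rrList k m).Pairwise (· ≥ ·) := by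
  refine List.pairwise_iff_getElem.mpr fun i j hi hj hij => ?_
  simp only [rrList, List.getElem_map, List.getElem_range]
  have := countGe_antitone m (show i + 1 ≤ j + 1 by omega)
  omega

lemma rr_rrList {k : ℕ} (hk : 0 < k) (m : Multiset ℕ) : RR (rrList k m) k := by
  refine ⟨length_rrList k m, fun i hi => ?_, ?_⟩
  · rw [getD_rrList m hi, getD_rrList m (by omega)]
    have := countGe_antitone m (show i + 1 ≤ i + 1 + 1 by omega)
    omega
  · rw [getD_rrList m (by omega)]
    omega

lemma sum_rrList {k : ℕ} {m : Multiset ℕ} (hm : ∀ x ∈ m, x ≤ k) :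
    (rrList k m).sum = k * k + m.sum := by
  rw [rrList, List.sum_map_range, sum_add_distrib, sum_range_staircase, sum_eq_sum_countGe hm]

lemma rrMultiset_rrList {k : ℕ} {m : Multiset ℕ} (hm : ∀ x ∈ m, 1 ≤ x ∧ x ≤ k) :
    rrMultiset (rrList k m) k = m := by
  conv_rhs => rw [← ofCountGe_countGe hm]
  refine ofCountGe_congr fun i hi => ?_
  rcases hi.lt_or_eq with hi | rfl
  · rw [getD_rrList m hi]
    omega
  · rw [List.getD_eq_default _ _ (length_rrList _ m).le, Nat.zero_sub,
      countGe_eq_zero (fun x hx => (hm x hx).2) (Nat.lt_succ_self i)]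

lemma mem_rrMultiset {L : List ℕ} {k x : ℕ} (hx : x ∈ rrMultiset L k) : 1 ≤ x ∧ x ≤ k :=
  mem_ofCountGe hx

namespace RR

variable {L : List ℕ} {k : ℕ} (h : RR L k)
include h

lemma pos : 0 < k := by
  obtain ⟨hlen, -, hlast⟩ := h
  by_contra hk
  rw [Nat.eq_zero_of_not_pos hk] at hlen hlast
  rw [List.getD_eq_default _ _ (by omega)] at hlast
  omega

lemma staircase_le_getD {i : ℕ} (hi : i < k) : 2 * (k - 1 - i) + 1 ≤ L.getD i 0 := by
  obtain ⟨-, hgap, hlast⟩ := h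
  obtain ⟨j, hj⟩ : ∃ j, k - 1 - i = j := ⟨_, rfl⟩
  induction j generalizing i with
  | zero =>
    rw [show i = k - 1 by omega]
    omega
  | succ j ih =>
    have := ih (i := i + 1) (by omega) (by omega)
    have := hgap i (by omega)
    omega

lemma antitone_excess : Antitone fun i => L.getD i 0 - (2 * (k - 1 - i) + 1) := by
  refine antitone_nat_of_succ_le fun i => ?_
  by_cases hi : i + 1 < k
  · have := h.staircase_le_getD hi
    have := h.2.1 i hi
    omega
  · rw [List.getD_eq_default _ _ (by rw [h.1]; omega)]
    omega

lemma countGe_rrMultiset {i : ℕ} (hi : i < k) :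
    countGe (rrMultiset L k) (i + 1) = L.getD i 0 - (2 * (k - 1 - i) + 1) := by
  rw [rrMultiset, countGe_ofCountGe h.antitone_excess hi.le,
    List.getD_eq_default _ _ h.1.le]
  omega

lemma rrList_rrMultiset : rrList k (rrMultiset L k) = L := by
  refine List.ext_getElem (by rw [length_rrList, h.1]) fun i h₁ h₂ => ?_
  have hi : i < k := by rwa [length_rrList] at h₁
  rw [← List.getD_eq_getElem _ 0, ← List.getD_eq_getElem _ 0, getD_rrList _ hi,
    h.countGe_rrMultiset hi]
  have := h.staircase_le_getD hi
  omega

lemma tRR_eq_card_toFinset : tRR L k = (rrMultiset L k).toFinset.card := by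
  obtain ⟨k, rfl⟩ : ∃ k', k = k' + 1 := ⟨k - 1, (Nat.succ_pred_eq_of_pos h.pos).symm⟩
  have hgap : ∀ i ∈ range k, (L.getD (i + 1) 0 + 2 < L.getD i 0 ↔
      L.getD (i + 1) 0 - (2 * (k - (i + 1)) + 1) < L.getD i 0 - (2 * (k - i) + 1)) := fun i hi => by
    rw [mem_range] at hi
    have := h.staircase_le_getD (i := i + 1) (by omega)
    simp only [Nat.add_sub_cancel] at this
    omega
  rw [rrMultiset, card_toFinset_ofCountGe, tRR, range_add_one, filter_insert, Nat.add_sub_cancel,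
    List.getD_eq_default _ _ h.1.le, filter_congr hgap]
  simp only [Nat.sub_self, Nat.zero_sub]
  split_ifs with h₁ h₂ h₂
  · rw [card_insert_of_notMem (by simp)]
  · omega
  · omega
  · rfl

lemma sum_eq : k * k + (rrMultiset L k).sum = L.sum := by
  conv_rhs => rw [← h.rrList_rrMultiset]
  rw [sum_rrList fun x hx => (mem_rrMultiset hx).2]

end RR

end RogersRamanujan

lemma mem_rowsBelow_add_colsRight {n : ℕ} (π : n.Partition) :
    ∀ x ∈ rowsBelow (sparts π) + colsRight (sparts π), 1 ≤ x ∧ x ≤ durfee (sparts π) :=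
  fun x hx => (Multiset.mem_add.mp hx).elim (mem_rowsBelow_sparts π x) mem_colsRight

lemma eq_of_toFinset_colsRight_eq {n : ℕ} {π₁ π₂ : n.Partition}
    (hk : durfee (sparts π₁) = durfee (sparts π₂))
    (hdisj₁ : Disjoint (rowsBelow (sparts π₁)) (colsRight (sparts π₁)))
    (hdisj₂ : Disjoint (rowsBelow (sparts π₂)) (colsRight (sparts π₂)))
    (hsum : rowsBelow (sparts π₁) + colsRight (sparts π₁) =
      rowsBelow (sparts π₂) + colsRight (sparts π₂))
    (h : (colsRight (sparts π₁)).toFinset = (colsRight (sparts π₂)).toFinset) : π₁ = π₂ := by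
  have hν : colsRight (sparts π₁) = colsRight (sparts π₂) := by
    rw [← Multiset.filter_mem_toFinset_add_of_disjoint hdisj₁,
      ← Multiset.filter_mem_toFinset_add_of_disjoint hdisj₂, hsum, h]
  have hμ : rowsBelow (sparts π₁) = rowsBelow (sparts π₂) := by
    rwa [hν, add_left_inj] at hsum
  exact Nat.Partition.ext (by
    rw [parts_eq_topRows_add_rowsBelow, parts_eq_topRows_add_rowsBelow, hk, hμ, hν])

lemma exists_colsRight_eq_filter {n k : ℕ} {m : Multiset ℕ} (hm : ∀ x ∈ m, 1 ≤ x ∧ x ≤ k)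
    (hn : k * k + m.sum = n) (S : Finset ℕ) :
    ∃ π : n.Partition, durfee (sparts π) = k ∧ rowsBelow (sparts π) = m.filter (· ∉ S) ∧
      colsRight (sparts π) = m.filter (· ∈ S) := by
  have hμ : ∀ x ∈ m.filter (· ∉ S), 1 ≤ x ∧ x ≤ k :=
    fun x hx => hm x (Multiset.mem_of_mem_filter hx)
  have hν : ∀ x ∈ m.filter (· ∈ S), 1 ≤ x ∧ x ≤ k :=
    fun x hx => hm x (Multiset.mem_of_mem_filter hx)
  have hsplit : m.filter (· ∉ S) + m.filter (· ∈ S) = m := by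
    rw [add_comm, Multiset.filter_add_not]
  have hμ' := fun x hx => (hμ x hx).2
  obtain ⟨π, hπ⟩ := exists_sparts_eq_assemble hμ (fun x hx => (hν x hx).2)
    (by rw [add_assoc, ← Multiset.sum_add, hsplit, hn])
  exact ⟨π, by rw [hπ, durfee_assemble hμ'], by rw [hπ, rowsBelow_assemble hμ'],
    by rw [hπ, colsRight_assemble hμ' hν]⟩

lemma card_filter_disjoint_add_eq {n k : ℕ} {m : Multiset ℕ} (hm : ∀ x ∈ m, 1 ≤ x ∧ x ≤ k)
    (hn : k * k + m.sum = n) :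
    (univ.filter fun π : n.Partition => durfee (sparts π) = k ∧
      Disjoint (rowsBelow (sparts π)) (colsRight (sparts π)) ∧
      rowsBelow (sparts π) + colsRight (sparts π) = m).card = 2 ^ m.toFinset.card := by
  rw [← card_powerset]
  refine card_bij (fun π _ => (colsRight (sparts π)).toFinset) (fun π hπ => ?_)
    (fun π₁ hπ₁ π₂ hπ₂ h => ?_) fun S hS => ?_
  · obtain ⟨-, -, hsum⟩ := (mem_filter.mp hπ).2
    exact mem_powerset.mpr (Multiset.toFinset_subset.mpr fun x hx =>
      hsum ▸ Multiset.mem_add.mpr (Or.inr hx))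
  · obtain ⟨hk₁, hdisj₁, hsum₁⟩ := (mem_filter.mp hπ₁).2
    obtain ⟨hk₂, hdisj₂, hsum₂⟩ := (mem_filter.mp hπ₂).2
    exact eq_of_toFinset_colsRight_eq (hk₁.trans hk₂.symm) hdisj₁ hdisj₂ (hsum₁.trans hsum₂.symm) h
  · obtain ⟨π, hk, hμ, hν⟩ := exists_colsRight_eq_filter hm hn S
    refine ⟨π, mem_filter.mpr ⟨mem_univ _, hk, ?_, ?_⟩, ?_⟩
    · rw [hμ, hν]
      exact Multiset.disjoint_left.mpr fun hx hx' =>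
        (Multiset.mem_filter.mp hx).2 (Multiset.mem_filter.mp hx').2
    · rw [hμ, hν, add_comm, Multiset.filter_add_not]
    · ext x
      rw [hν, Multiset.mem_toFinset, Multiset.mem_filter]
      exact ⟨And.right, fun hx => ⟨Multiset.mem_toFinset.mp (mem_powerset.mp hS hx), hx⟩⟩

def toRR {n : ℕ} (π : n.Partition) : n.Partition where
  parts := ↑(rrList (durfee (sparts π)) (rowsBelow (sparts π) + colsRight (sparts π)))
  parts_pos {x} hx := by
    obtain ⟨i, -, rfl⟩ := List.mem_map.mp (Multiset.mem_coe.mp hx)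
    omega
  parts_sum := by
    rw [Multiset.sum_coe, sum_rrList fun x hx => (mem_rowsBelow_add_colsRight π x hx).2,
      Multiset.sum_add, ← add_assoc, ← sum_eq_durfee_mul_add (sparts_sorted π), sum_sparts]

lemma sparts_toRR {n : ℕ} (π : n.Partition) :
    sparts (toRR π) = rrList (durfee (sparts π)) (rowsBelow (sparts π) + colsRight (sparts π)) :=
  sparts_eq_of_coe_eq (pairwise_rrList _ _) rfl

lemma rr_toRR {n k : ℕ} (hk : 0 < k) {π : n.Partition} (h : durfee (sparts π) = k) :
    RR (sparts (toRR π)) k := by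
  rw [sparts_toRR, h]
  exact rr_rrList hk _

lemma toRR_eq_iff {n k : ℕ} {π π' : n.Partition} (hπ' : RR (sparts π') k)
    (hk : durfee (sparts π) = k) :
    toRR π = π' ↔ rowsBelow (sparts π) + colsRight (sparts π) = rrMultiset (sparts π') k := by
  rw [← sparts_injective.eq_iff, sparts_toRR, hk]
  constructor
  · intro h
    rw [← h, rrMultiset_rrList (hk ▸ mem_rowsBelow_add_colsRight π)]
  · intro h
    rw [h, hπ'.rrList_rrMultiset]

theorem statement2_general (n k : ℕ) (hk : 0 < k) :
    bCount n k =
      ∑ π ∈ Finset.univ.filter (fun π : n.Partition => RR (sparts π) k),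
        2 ^ tRR (sparts π) k := by
  rw [bCount, Nat.card_eq_fintype_card, Fintype.card_subtype,
    card_eq_sum_card_fiberwise (f := toRR) (t := univ.filter fun π => RR (sparts π) k) fun π hπ =>
      mem_filter.mpr ⟨mem_univ _, rr_toRR hk (mem_filter.mp hπ).2.2⟩]
  refine sum_congr rfl fun π' hπ' => ?_
  have hRR := (mem_filter.mp hπ').2
  rw [hRR.tRR_eq_card_toFinset, ← card_filter_disjoint_add_eq (fun x hx => mem_rrMultiset hx)
    (hRR.sum_eq.trans (sum_sparts π')), filter_filter]
  refine congrArg card (filter_congr fun π _ => ?_)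
  rw [isBasis_iff_disjoint]
  constructor
  · rintro ⟨⟨hdisj, hk⟩, h⟩
    exact ⟨hk, hdisj, (toRR_eq_iff hRR hk).mp h⟩
  · rintro ⟨hk, hdisj, h⟩
    exact ⟨⟨hdisj, hk⟩, (toRR_eq_iff hRR hk).mpr h⟩

theorem statement2 (n k : ℕ) (hn : 0 < n) (hk : 0 < k) :
    bCount n k =
      ∑ π ∈ Finset.univ.filter (fun π : n.Partition => RR (sparts π) k),
        2 ^ tRR (sparts π) k :=
  statement2_general n k hk

end BasisPartitions
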